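/- For every integer n ≥ 3 and every λ with 1/(n+1) ≤ λ ≤ λ̃₊(n) := 3^{1/3}/(2^{1/3}·n + 3^{1/3} − 2^{1/3}), it holds that p_{n−3}(n,λ) ≤ p_n(n,λ). -/
import Mathlib


/-- The output distribution `p(n,λ)` of the general attenuator with Fock environment `|n⟩`,
for `ℓ = 0, …, n+1` (the case `ℓ = n+1` is the continuous extension of the formula
`… · λ^(n-ℓ) · …`, which involves `λ⁻¹`, valid for all `λ ∈ (0,1)`). -/
noncomputable def pdist (n ℓ : ℕ) (t : ℝ) : ℝ :=
  if ℓ ≤ n then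
    1 / (2 * ((n : ℝ) + 1) * (1 - t)) * ((n + 1).choose ℓ : ℝ) * (1 - t) ^ ℓ * t ^ (n - ℓ) *
      ((1 - t) * ((n : ℝ) - (ℓ : ℝ) + 1) + (((n : ℝ) + 1) * (1 - t) - (ℓ : ℝ)) ^ 2)
  else ((n : ℝ) + 1) * t * (1 - t) ^ n / 2

/-- The output distribution `q(n,λ)` (spectrum of the joint output state). -/
noncomputable def qdist (n ℓ : ℕ) (t : ℝ) : ℝ :=
  if ℓ ≤ n then
    1 / (2 * ((n : ℝ) + 1) * (1 - t)) * ((n + 1).choose ℓ : ℝ) * (1 - t) ^ ℓ * t ^ (n - ℓ) *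
      (t * (ℓ : ℝ) + (((n : ℝ) + 1) * (1 - t) - (ℓ : ℝ)) ^ 2)
  else (1 - t) ^ n * (1 + ((n : ℝ) + 1) * t) / 2

/-- The threshold . -/
noncomputable def lamTildePlus (n : ℕ) : ℝ :=
  (3 : ℝ) ^ ((1 : ℝ) / 3) /
    ((2 : ℝ) ^ ((1 : ℝ) / 3) * (n : ℝ) + (3 : ℝ) ^ ((1 : ℝ) / 3) - (2 : ℝ) ^ ((1 : ℝ) / 3))

set_option maxHeartbeats 1600000 in
theorem pdist_n_sub_three_le (n : ℕ) (hn : 3 ≤ n) (t : ℝ)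
    (h1 : 1 / ((n : ℝ) + 1) ≤ t) (h2 : t ≤ lamTildePlus n) :
    pdist n (n - 3) t ≤ pdist n n t := by
  obtain ⟨m, rfl⟩ : ∃ m, n = m + 3 := ⟨n - 3, by omega⟩
  have hM0 : (0:ℝ) ≤ (m:ℝ) := Nat.cast_nonneg m
  have ha : (0:ℝ) < (2 : ℝ) ^ ((1 : ℝ) / 3) := Real.rpow_pos_of_pos (by norm_num) _
  have hb : (0:ℝ) < (3 : ℝ) ^ ((1 : ℝ) / 3) := Real.rpow_pos_of_pos (by norm_num) _
  set a : ℝ := (2 : ℝ) ^ ((1 : ℝ) / 3) with haa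
  set b : ℝ := (3 : ℝ) ^ ((1 : ℝ) / 3) with hbb
  have ha3 : a ^ (3:ℕ) = 2 := by
    rw [haa, ← Real.rpow_natCast ((2:ℝ) ^ ((1:ℝ)/3)) 3, ← Real.rpow_mul (by norm_num : (0:ℝ) ≤ 2)]
    norm_num
  have hb3 : b ^ (3:ℕ) = 3 := by
    rw [hbb, ← Real.rpow_natCast ((3:ℝ) ^ ((1:ℝ)/3)) 3, ← Real.rpow_mul (by norm_num : (0:ℝ) ≤ 3)]
    norm_num
  have hcast : ((m + 3 : ℕ) : ℝ) = (m:ℝ) + 3 := by push_cast; ring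
  have ht0 : 0 < t := lt_of_lt_of_le (by rw [hcast]; positivity) h1
  have hu0 : (1:ℝ) ≤ ((m:ℝ) + 4) * t := by
    rw [hcast] at h1
    rw [div_le_iff₀ (by linarith)] at h1
    linarith [h1]
  have hlin : a * (((m:ℝ) + 2) * t) ≤ b * (1 - t) := by
    rw [lamTildePlus, hcast, ← haa, ← hbb] at h2
    rw [le_div_iff₀ (by nlinarith)] at h2
    nlinarith [h2]
  have ht1 : 0 < 1 - t := by
    have h1' : 0 < b * (1 - t) := lt_of_lt_of_le (by positivity) hlin
    nlinarith [h1']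
  have hcube : 2 * (((m:ℝ) + 2) ^ 3 * t ^ 3) ≤ 3 * (1 - t) ^ 3 := by
    have h := pow_le_pow_left₀ (by positivity) hlin 3
    rw [mul_pow, mul_pow, mul_pow, ha3, hb3] at h
    exact h
  -- choose values
  have hch1 : ((m + 3 + 1).choose (m + 3) : ℝ) = (m:ℝ) + 4 := by
    rw [Nat.choose_succ_self_right]
    push_cast; ring
  have e2 : (m + 4).choose 4 * 24 = (m + 4) * (m + 3) * (m + 2) * (m + 1) := by
    have h := Nat.choose_mul_factorial_mul_factorial (show 4 ≤ m + 4 by omega)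
    rw [show m + 4 - 4 = m by omega] at h
    have hf : Nat.factorial (m + 4) = (m + 4) * (m + 3) * (m + 2) * (m + 1) * Nat.factorial m := by
      show Nat.factorial (m + 3 + 1) = _
      rw [Nat.factorial_succ, Nat.factorial_succ, Nat.factorial_succ, Nat.factorial_succ]
      ring
    rw [hf, show Nat.factorial 4 = 24 from rfl] at h
    exact Nat.eq_of_mul_eq_mul_right (Nat.factorial_pos m) (by linarith [h])
  have hch2 : ((m + 3 + 1).choose m : ℝ) =
      ((m:ℝ) + 4) * ((m:ℝ) + 3) * ((m:ℝ) + 2) * ((m:ℝ) + 1) / 24 := by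
    have e1 : (m + 3 + 1).choose m = (m + 4).choose 4 := by
      have h4 := Nat.choose_symm (show 4 ≤ m + 4 by omega)
      rw [show m + 4 - 4 = m by omega] at h4
      rw [show m + 3 + 1 = m + 4 from rfl]; exact h4
    have e2' : ((m + 4).choose 4 : ℝ) * 24 =
        ((m:ℝ) + 4) * ((m:ℝ) + 3) * ((m:ℝ) + 2) * ((m:ℝ) + 1) := by
      exact_mod_cast e2
    rw [e1, eq_div_iff (by norm_num : (24:ℝ) ≠ 0)]
    linarith [e2']
  -- unfold pdist
  rw [show m + 3 - 3 = m by omega]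
  simp only [pdist, if_pos (show m ≤ m + 3 by omega), if_pos (le_refl (m + 3)),
    Nat.sub_self, show m + 3 - m = 3 by omega, pow_zero, hcast]
  rw [hch1, hch2, pow_add (1 - t) m 3]
  set A1 : ℝ := (1 - t) * ((m:ℝ) + 3 - (m:ℝ) + 1) + (((m:ℝ) + 3 + 1) * (1 - t) - (m:ℝ)) ^ 2
    with hA1
  set A2 : ℝ := (1 - t) * ((m:ℝ) + 3 - ((m:ℝ) + 3) + 1) +
      (((m:ℝ) + 3 + 1) * (1 - t) - ((m:ℝ) + 3)) ^ 2 with hA2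
  have hA1nn : 0 ≤ A1 := by
    rw [hA1]
    nlinarith [ht1, sq_nonneg (((m:ℝ) + 3 + 1) * (1 - t) - (m:ℝ))]
  have h16 : A1 ≤ 16 * A2 := by
    have u0 : (0:ℝ) ≤ ((m:ℝ) + 4) * t - 1 := by linarith
    have hQ : ((m:ℝ) + 4) * A1 ≤ ((m:ℝ) + 4) * (16 * A2) := by
      rw [hA1, hA2]
      nlinarith [mul_nonneg hM0 (sq_nonneg (((m:ℝ) + 4) * t - 1)), mul_nonneg hM0 u0,
        mul_nonneg u0 u0, hM0, u0]
    exact le_of_mul_le_mul_left hQ (by linarith)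
  have key0 : ((m:ℝ) + 3) * ((m:ℝ) + 2) * ((m:ℝ) + 1) * (t ^ 3 * A1) ≤
      24 * ((1 - t) ^ 3 * A2) := by
    have Q1 : 0 ≤ ((m:ℝ) + 2) * (t ^ 3 * A1) := by positivity
    have Q2 : 0 ≤ (3 * (1 - t) ^ 3 - 2 * (((m:ℝ) + 2) ^ 3 * t ^ 3)) * A1 :=
      mul_nonneg (by linarith) hA1nn
    have Q3 : 0 ≤ (1 - t) ^ 3 * (16 * A2 - A1) :=
      mul_nonneg (by positivity) (by linarith)
    linarith [Q1, Q2, Q3]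
  have hMpos : (0:ℝ) < (m:ℝ) + 4 := by linarith
  have hden : (0:ℝ) < 2 * ((m:ℝ) + 3 + 1) * (1 - t) := by nlinarith
  have e : (0:ℝ) ≤ ((m:ℝ) + 4) / 24 * (1 / (2 * ((m:ℝ) + 3 + 1) * (1 - t)) * (1 - t) ^ m) :=
    le_of_lt (mul_pos (div_pos hMpos (by norm_num))
      (mul_pos (one_div_pos.mpr hden) (pow_pos ht1 m)))
  have H := mul_le_mul_of_nonneg_left key0 e
  linarith [H]
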